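/- Let y0 > 0, ε > 0, and let q, Θ : ℝ → ℝ with q(φ) > 0 for all φ. Set w3(φ) := i·(√(q(φ))·sin Θ(φ) + y0), w4(φ) := √(q(φ))·cos Θ(φ) + i·y0, and for integers k ≥ 2, a_k(φ) := q(φ)^{−k/2} − e^{ikΘ(φ)}·w3(φ)^{−k} − e^{ikΘ(φ)}·w4(φ)^{−k}. Fix φ ∈ ℝ such that 2ε < min(√(q(φ)), |w3(φ)|, |w4(φ)|), and define for θ ∈ ℝ: Ψ2(θ) := (1/(2π))∫₀^{2π}∫₀¹ [log|1 + ε·(e^{iθ} + l·e^{iη})/√(q(φ))| − ε·Re((e^{iθ} + l·e^{iη})/√(q(φ)))]·l dl dη, Ψ3(θ) := −(1/(2π))∫₀^{2π}∫₀¹ [log|1 + ε·(e^{i(θ+Θ(φ))} − l·e^{−i(η+Θ(φ))})/w3(φ)| − ε·Re((e^{i(θ+Θ(φ))} − l·e^{−i(η+Θ(φ))})/w3(φ))]·l dl dη, Ψ4(θ) := −(1/(2π))∫₀^{2π}∫₀¹ [log|1 + ε·(e^{i(θ+Θ(φ))} + l·e^{−i(η+Θ(φ))})/w4(φ)| − ε·Re((e^{i(θ+Θ(φ))}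 + l·e^{−i(η+Θ(φ))})/w4(φ))]·l dl dη. Then for all θ ∈ ℝ: Ψ2(θ) + Ψ3(θ) + Ψ4(θ) = Σ_{k=2}^∞ ((−1)^{k+1}·ε^k/(2k))·Re(a_k(φ)·e^{ikθ}), the series converging absolutely; consequently the map θ ↦ Ψ2(θ) + Ψ3(θ) + Ψ4(θ) is differentiable with derivative Σ_{k=2}^∞ ((−ε)^k/2)·Im(a_k(φ)·e^{ikθ}) at every θ. -/

import Mathlib

/-- The elementary interaction integrand:
`log|1 + ε·z/w| − ε·Re(z/w)`. -/
noncomputable def interact (ε : ℝ) (w z : ℂ) : ℝ :=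
  Real.log ‖1 + (ε : ℂ) * z / w‖ - ε * (z / w).re

/-- The `k`-th term of the series for the sum `Ψ2 + Ψ3 + Ψ4`. -/
noncomputable def Sterm (ε : ℝ) (a : ℕ → ℂ) (θ : ℝ) (k : ℕ) : ℝ :=
  ((-1 : ℝ) ^ (k + 1) * ε ^ k / (2 * k)) *
    (a k * Complex.exp ((k : ℂ) * (θ : ℂ) * Complex.I)).re

/-- The `k`-th term of the series for the derivative of `Ψ2 + Ψ3 + Ψ4`. -/
noncomputable def Dterm (ε : ℝ) (a : ℕ → ℂ) (θ : ℝ) (k : ℕ) : ℝ :=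
  ((-ε) ^ k / 2) * (a k * Complex.exp ((k : ℂ) * (θ : ℂ) * Complex.I)).im

open Complex intervalIntegral MeasureTheory Finset

lemma negpow3 (k : ℕ) : (-1:ℝ)^(k+3) = (-1:ℝ)^(k+1) := by
  rw [pow_succ, pow_succ]; ring

lemma logSeries {u : ℂ} (hu : ‖u‖ < 1) :
    HasSum (fun k : ℕ => (-1:ℂ)^(k+1) * u^(k+2) / ((k:ℂ)+2)) (Complex.log (1+u) - u) := by
  have h := Complex.hasSum_taylorSeries_log (z := u) (by simpa using hu)
  have hsum2 : ∑ i ∈ Finset.range 2, (-1:ℂ)^(i+1) * u^i / (i:ℂ) = u := by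
    rw [Finset.sum_range_succ, Finset.sum_range_one]
    norm_num
  have h2 := (hasSum_nat_add_iff (f := fun n : ℕ => (-1:ℂ)^(n+1) * u^n / n) 2).mpr
    (by rw [hsum2, sub_add_cancel]; exact h)
  convert h2 using 2 with k
  · rfl
  rw [show k + 2 + 1 = k + 3 from rfl]
  have : (-1:ℂ)^(k+3) = (-1:ℂ)^(k+1) := by rw [pow_succ, pow_succ]; ring
  rw [this]
  push_cast
  ring

lemma interact_eq (ε : ℝ) (w z : ℂ) :
    interact ε w z = (Complex.log (1 + (ε:ℂ)*z/w) - (ε:ℂ)*z/w).re := by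
  rw [interact, Complex.sub_re, Complex.log_re]
  congr 1
  rw [mul_div_assoc, Complex.re_ofReal_mul]

lemma pointwise {ε : ℝ} {w z : ℂ} (h : ‖(ε:ℂ)*z/w‖ < 1) (l : ℝ) :
    HasSum (fun k : ℕ => ((-1:ℝ)^(k+1) * ε^(k+2) / ((k:ℝ)+2)) * ((z/w)^(k+2)).re * l)
      (interact ε w z * l) := by
  have h1 := (logSeries h).mapL Complex.reCLM
  have h2 := h1.mul_right l
  simp only [Complex.reCLM_apply] at h2
  rw [← interact_eq] at h2
  convert h2 using 2 with k
  · rfl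
  have : (-1:ℂ)^(k+1) * ((ε:ℂ)*z/w)^(k+2) / ((k:ℂ)+2)
      = ↑((-1:ℝ)^(k+1) * ε^(k+2) / ((k:ℝ)+2)) * (z/w)^(k+2) := by
    push_cast
    ring
  simp only [this, Complex.re_ofReal_mul]

lemma intpow (j : ℕ) : (∫ l in (0:ℝ)..1, (l:ℂ)^(j+1)) = 1/((j:ℂ)+2) := by
  have h : ∀ l : ℝ, (l:ℂ)^(j+1) = ((l^(j+1) : ℝ) : ℂ) := fun l => by push_cast; ring
  simp_rw [h]
  rw [intervalIntegral.integral_ofReal, integral_pow]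
  push_cast
  rw [one_pow]
  norm_num
  ring

lemma intexp (s : ℤ) (hs : s ≠ 0) (j : ℕ) (hj : j ≠ 0) :
    (∫ η in (0:ℝ)..(2*Real.pi), Complex.exp ((s:ℂ)*(η:ℂ)*Complex.I)^j) = 0 := by
  have h : ∀ η : ℝ, Complex.exp ((s:ℂ)*(η:ℂ)*Complex.I)^j
      = Complex.exp (((((j:ℤ)*s : ℤ):ℂ)*Complex.I) * (η:ℂ)) := by
    intro η; rw [← Complex.exp_nat_mul]; congr 1; push_cast; ring
  simp_rw [h]
  have hc : ((((j:ℤ)*s : ℤ):ℂ)*Complex.I) ≠ 0 := by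
    apply mul_ne_zero _ Complex.I_ne_zero
    exact_mod_cast mul_ne_zero (Int.ofNat_ne_zero.mpr hj) hs
  rw [integral_exp_mul_complex hc]
  have h1 : ((((j:ℤ)*s : ℤ):ℂ)*Complex.I) * ((2:ℝ)*Real.pi : ℝ)
      = (((j:ℤ)*s : ℤ):ℂ) * (2 * (Real.pi:ℂ) * Complex.I) := by push_cast; ring
  rw [h1, Complex.exp_int_mul_two_pi_mul_I]
  norm_num

lemma innerComplex (A B E w : ℂ) (m : ℕ) :
    (∫ l in (0:ℝ)..1, (l:ℂ) * ((A + (l:ℂ)*B*E)/w)^m)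
      = ∑ j ∈ Finset.range (m+1),
          (B*E)^j * A^(m-j) * (Nat.choose m j : ℂ) / ((j:ℂ)+2) / w^m := by
  have expand : ∀ l : ℝ, (l:ℂ) * ((A + (l:ℂ)*B*E)/w)^m
      = ∑ j ∈ Finset.range (m+1),
          ((B*E)^j * A^(m-j) * (Nat.choose m j : ℂ) / w^m) * (l:ℂ)^(j+1) := by
    intro l
    rw [div_pow, add_comm A, add_pow, Finset.sum_div, Finset.mul_sum]
    refine Finset.sum_congr rfl fun j hj => ?_
    rw [show ((l:ℂ) * B * E) = (l:ℂ) * (B*E) from by ring, mul_pow]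
    ring
  simp_rw [expand]
  rw [intervalIntegral.integral_finset_sum]
  · refine Finset.sum_congr rfl fun j hj => ?_
    rw [intervalIntegral.integral_const_mul, intpow]
    ring
  · intro j hj
    apply Continuous.intervalIntegrable
    exact continuous_const.mul (Complex.continuous_ofReal.pow _)

lemma outerComplex (A B w : ℂ) (s : ℤ) (hs : s ≠ 0) (m : ℕ) :
    (∫ η in (0:ℝ)..(2*Real.pi), ∑ j ∈ Finset.range (m+1),
        (B*Complex.exp ((s:ℂ)*(η:ℂ)*Complex.I))^j * A^(m-j) * (Nat.choose m j : ℂ)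
          / ((j:ℂ)+2) / w^m)
      = (Real.pi:ℂ) * A^m / w^m := by
  have hEc : Continuous fun η : ℝ => Complex.exp ((s:ℂ)*(η:ℂ)*Complex.I) :=
    ((continuous_const.mul Complex.continuous_ofReal).mul continuous_const).cexp
  rw [intervalIntegral.integral_finset_sum (fun j hj => by
    apply Continuous.intervalIntegrable
    exact ((((continuous_const.mul hEc).pow j).mul continuous_const).mul
      continuous_const).div_const _ |>.div_const _)]
  have hterm : ∀ j ∈ Finset.range (m+1), j ≠ 0 →
      (∫ η in (0:ℝ)..(2*Real.pi),
        (B*Complex.exp ((s:ℂ)*(η:ℂ)*Complex.I))^j * A^(m-j) * (Nat.choose m j : ℂ)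
          / ((j:ℂ)+2) / w^m) = 0 := by
    intro j _ hj
    have h : ∀ η : ℝ, (B*Complex.exp ((s:ℂ)*(η:ℂ)*Complex.I))^j * A^(m-j) * (Nat.choose m j : ℂ)
          / ((j:ℂ)+2) / w^m
        = (B^j * A^(m-j) * (Nat.choose m j : ℂ) / ((j:ℂ)+2) / w^m)
            * Complex.exp ((s:ℂ)*(η:ℂ)*Complex.I)^j := by
      intro η; rw [mul_pow]; ring
    simp_rw [h]
    rw [intervalIntegral.integral_const_mul, intexp s hs j hj, mul_zero]
  rw [Finset.sum_eq_single 0 (fun j hj hj0 => hterm j hj hj0)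
    (fun h => absurd (Finset.mem_range.mpr (Nat.succ_pos m)) h)]
  simp only [pow_zero, one_mul, Nat.choose_zero_right, Nat.sub_zero, Nat.cast_one, mul_one,
    Nat.cast_zero, zero_add]
  rw [intervalIntegral.integral_const]
  rw [sub_zero]
  rw [Complex.real_smul]
  push_cast
  ring

lemma inner_eval (ε : ℝ) (A B E w : ℂ) (k : ℕ) :
    (∫ l in (0:ℝ)..1,
        ((-1:ℝ)^(k+1) * ε^(k+2) / ((k:ℝ)+2)) * (((A + (l:ℂ)*B*E)/w)^(k+2)).re * l)
      = ((-1:ℝ)^(k+1) * ε^(k+2) / ((k:ℝ)+2)) *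
          (∑ j ∈ Finset.range (k+2+1),
            (B*E)^j * A^(k+2-j) * (Nat.choose (k+2) j : ℂ) / ((j:ℂ)+2) / w^(k+2)).re := by
  have h : ∀ l : ℝ,
      ((-1:ℝ)^(k+1) * ε^(k+2) / ((k:ℝ)+2)) * (((A + (l:ℂ)*B*E)/w)^(k+2)).re * l
      = ((-1:ℝ)^(k+1) * ε^(k+2) / ((k:ℝ)+2)) *
          Complex.reCLM ((l:ℂ) * ((A + (l:ℂ)*B*E)/w)^(k+2)) := by
    intro l
    simp only [Complex.reCLM_apply, Complex.re_ofReal_mul]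
    ring
  simp_rw [h]
  rw [intervalIntegral.integral_const_mul]
  have hint : IntervalIntegrable (fun l : ℝ => (l:ℂ) * ((A + (l:ℂ)*B*E)/w)^(k+2))
      volume 0 1 := by
    apply Continuous.intervalIntegrable
    exact Complex.continuous_ofReal.mul
      (((continuous_const.add ((Complex.continuous_ofReal.mul continuous_const).mul
        continuous_const)).div_const _).pow _)
  rw [ContinuousLinearMap.intervalIntegral_comp_comm Complex.reCLM hint]
  rw [innerComplex]
  simp only [Complex.reCLM_apply]

lemma key (ε : ℝ) (hε : 0 < ε) (w A B : ℂ) (hA : ‖A‖ ≤ 1) (hB : ‖B‖ ≤ 1)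
    (s : ℤ) (hs : s ≠ 0) (hw : 2 * ε < ‖w‖) :
    HasSum (fun k : ℕ => ((-1:ℝ)^(k+1) * ε^(k+2) / (2*((k:ℝ)+2))) * ((A/w)^(k+2)).re)
      ((1/(2*Real.pi)) * ∫ η in (0:ℝ)..(2*Real.pi), ∫ l in (0:ℝ)..1,
        interact ε w (A + (l:ℂ) * B * Complex.exp ((s:ℂ)*(η:ℂ)*Complex.I)) * l) := by
  have hwpos : 0 < ‖w‖ := lt_trans (by positivity) hw
  have hw0 : w ≠ 0 := by
    intro h; rw [h] at hwpos; simp at hwpos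
  set r : ℝ := 2*ε/‖w‖ with hr
  have hr1 : r < 1 := (div_lt_one hwpos).mpr hw
  have hr0 : 0 ≤ r := by positivity
  have hrsum : Summable fun k : ℕ => r^(k+2) := by
    simp_rw [pow_add]
    exact (summable_geometric_of_lt_one hr0 hr1).mul_right _
  set E : ℝ → ℂ := fun η => Complex.exp ((s:ℂ)*(η:ℂ)*Complex.I) with hE
  have hEabs : ∀ η : ℝ, ‖E η‖ = 1 := by
    intro η
    rw [hE]
    simp only
    rw [show (s:ℂ)*(η:ℂ)*Complex.I = (((s:ℝ)*η : ℝ):ℂ)*Complex.I by push_cast; ring]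
    exact Complex.norm_exp_ofReal_mul_I _
  have hEcont : Continuous E :=
    ((continuous_const.mul Complex.continuous_ofReal).mul continuous_const).cexp
  set z : ℝ → ℝ → ℂ := fun η l => A + (l:ℂ)*B*(E η) with hz
  have hzle : ∀ η l, 0 ≤ l → l ≤ 1 → ‖z η l‖ ≤ 2 := by
    intro η l h0 h1
    calc ‖z η l‖ ≤ ‖A‖ + ‖(l:ℂ)*B*(E η)‖ :=
          norm_add_le _ _
    _ ≤ 1 + 1 := by
        refine add_le_add hA ?_
        rw [norm_mul, norm_mul, Complex.norm_real, Real.norm_eq_abs, hEabs, mul_one, _root_.abs_of_nonneg h0]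
        exact mul_le_one₀ h1 (norm_nonneg _) hB
    _ = 2 := by norm_num
  have huabs : ∀ η l, 0 ≤ l → l ≤ 1 → ‖(ε:ℂ) * z η l / w‖ ≤ r := by
    intro η l h0 h1
    rw [norm_div, norm_mul, Complex.norm_real, Real.norm_eq_abs, _root_.abs_of_pos hε, hr]
    have h2 : ε * ‖z η l‖ ≤ 2 * ε := by nlinarith [hzle η l h0 h1]
    gcongr
  have hult : ∀ η l, 0 ≤ l → l ≤ 1 → ‖(ε:ℂ) * z η l / w‖ < 1 :=
    fun η l h0 h1 => lt_of_le_of_lt (huabs η l h0 h1) hr1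
  -- uniform bound on terms
  have gb : ∀ (k : ℕ) (η l : ℝ), 0 ≤ l → l ≤ 1 →
      |((-1:ℝ)^(k+1) * ε^(k+2) / ((k:ℝ)+2)) * ((z η l/w)^(k+2)).re * l| ≤ r^(k+2) := by
    intro k η l h0 h1
    have h2 : |(((z η l)/w)^(k+2)).re| ≤ (2/‖w‖)^(k+2) := by
      refine le_trans (Complex.abs_re_le_norm _) ?_
      rw [norm_pow, norm_div]
      gcongr
      exact hzle η l h0 h1
    have h3 : |(-1:ℝ)^(k+1) * ε^(k+2) / ((k:ℝ)+2)| ≤ ε^(k+2) := by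
      have he : |(-1:ℝ)^(k+1) * ε^(k+2) / ((k:ℝ)+2)| = ε^(k+2) / ((k:ℝ)+2) := by
        rw [abs_div, abs_mul, _root_.abs_pow, abs_neg, abs_one, one_pow, one_mul,
          _root_.abs_pow, _root_.abs_of_pos hε,
          _root_.abs_of_pos (by positivity : (0:ℝ) < (k:ℝ)+2)]
      rw [he]
      apply div_le_self (by positivity)
      have : (0:ℝ) ≤ (k:ℝ) := Nat.cast_nonneg k
      linarith
    calc |((-1:ℝ)^(k+1) * ε^(k+2) / ((k:ℝ)+2)) * ((z η l/w)^(k+2)).re * l|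
        = |(-1:ℝ)^(k+1) * ε^(k+2) / ((k:ℝ)+2)| * |((z η l/w)^(k+2)).re| * |l| := by
          rw [abs_mul, abs_mul]
    _ ≤ ε^(k+2) * (2/‖w‖)^(k+2) * 1 := by
        have hl1 : |l| ≤ 1 := by rw [_root_.abs_of_nonneg h0]; exact h1
        exact mul_le_mul (mul_le_mul h3 h2 (abs_nonneg _) (by positivity)) hl1
          (abs_nonneg _) (by positivity)
    _ = r^(k+2) := by
        rw [mul_one, ← mul_pow, hr]
        congr 1
        field_simp
  have hmem : ∀ l : ℝ, l ∈ Set.uIoc (0:ℝ) 1 → 0 ≤ l ∧ l ≤ 1 := by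
    intro l hl
    rw [Set.uIoc_of_le (by norm_num : (0:ℝ) ≤ 1)] at hl
    exact ⟨hl.1.le, hl.2⟩
  -- inner HasSum
  have hinner : ∀ η : ℝ, HasSum
      (fun k : ℕ => ∫ l in (0:ℝ)..1,
        ((-1:ℝ)^(k+1) * ε^(k+2) / ((k:ℝ)+2)) * ((z η l/w)^(k+2)).re * l)
      (∫ l in (0:ℝ)..1, interact ε w (z η l) * l) := by
    intro η
    apply intervalIntegral.hasSum_integral_of_dominated_convergence
      (bound := fun k (_ : ℝ) => r^(k+2))
    · intro k
      apply Continuous.aestronglyMeasurable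
      have : Continuous fun l : ℝ => ((z η l/w)^(k+2)).re :=
        Complex.continuous_re.comp (((continuous_const.add
          ((Complex.continuous_ofReal.mul continuous_const).mul
            continuous_const)).div_const _).pow _)
      exact (continuous_const.mul this).mul continuous_id
    · intro k
      filter_upwards with l hl
      obtain ⟨h0, h1⟩ := hmem l hl
      rw [Real.norm_eq_abs]
      exact gb k η l h0 h1
    · filter_upwards with l hl
      exact hrsum
    · exact intervalIntegrable_const
    · filter_upwards with l hl
      obtain ⟨h0, h1⟩ := hmem l hl
      exact pointwise (hult η l h0 h1) l
  -- value of inner integrals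
  have hval : ∀ (k : ℕ) (η : ℝ),
      (∫ l in (0:ℝ)..1,
        ((-1:ℝ)^(k+1) * ε^(k+2) / ((k:ℝ)+2)) * ((z η l/w)^(k+2)).re * l)
      = ((-1:ℝ)^(k+1) * ε^(k+2) / ((k:ℝ)+2)) *
          (∑ j ∈ Finset.range (k+2+1),
            (B*E η)^j * A^(k+2-j) * (Nat.choose (k+2) j : ℂ) / ((j:ℂ)+2) / w^(k+2)).re :=
    fun k η => inner_eval ε A B (E η) w k
  have Gb : ∀ (k : ℕ) (η : ℝ),
      |((-1:ℝ)^(k+1) * ε^(k+2) / ((k:ℝ)+2)) *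
          (∑ j ∈ Finset.range (k+2+1),
            (B*E η)^j * A^(k+2-j) * (Nat.choose (k+2) j : ℂ) / ((j:ℂ)+2) / w^(k+2)).re|
        ≤ r^(k+2) := by
    intro k η
    rw [← hval k η]
    have := intervalIntegral.norm_integral_le_of_norm_le_const
      (C := r^(k+2)) (a := (0:ℝ)) (b := 1)
      (f := fun l => ((-1:ℝ)^(k+1) * ε^(k+2) / ((k:ℝ)+2)) * ((z η l/w)^(k+2)).re * l)
      (fun l hl => by
        obtain ⟨h0, h1⟩ := hmem l hl
        show ‖_‖ ≤ _
        rw [Real.norm_eq_abs]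
        exact gb k η l h0 h1)
    have h2 : r^(k+2)*|1-(0:ℝ)| = r^(k+2) := by norm_num
    rw [← Real.norm_eq_abs, ← h2]
    exact this
  have hPcont : ∀ k : ℕ, Continuous fun η : ℝ =>
      (∑ j ∈ Finset.range (k+2+1),
        (B*E η)^j * A^(k+2-j) * (Nat.choose (k+2) j : ℂ) / ((j:ℂ)+2) / w^(k+2)) := by
    intro k
    apply continuous_finset_sum
    intro j _
    exact ((((continuous_const.mul hEcont).pow j).mul continuous_const).mul
      continuous_const).div_const _ |>.div_const _
  -- outer HasSum
  have houter : HasSum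
      (fun k : ℕ => ∫ η in (0:ℝ)..(2*Real.pi),
        ((-1:ℝ)^(k+1) * ε^(k+2) / ((k:ℝ)+2)) *
          (∑ j ∈ Finset.range (k+2+1),
            (B*E η)^j * A^(k+2-j) * (Nat.choose (k+2) j : ℂ) / ((j:ℂ)+2) / w^(k+2)).re)
      (∫ η in (0:ℝ)..(2*Real.pi), ∫ l in (0:ℝ)..1, interact ε w (z η l) * l) := by
    apply intervalIntegral.hasSum_integral_of_dominated_convergence
      (bound := fun k (_ : ℝ) => r^(k+2))
    · intro k
      apply Continuous.aestronglyMeasurable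
      exact continuous_const.mul (Complex.continuous_re.comp (hPcont k))
    · intro k
      filter_upwards with η _
      rw [Real.norm_eq_abs]
      exact Gb k η
    · filter_upwards with η _
      exact hrsum
    · exact intervalIntegrable_const
    · filter_upwards with η _
      have hfun : (fun k : ℕ => ((-1:ℝ)^(k+1) * ε^(k+2) / ((k:ℝ)+2)) *
          (∑ j ∈ Finset.range (k+2+1),
            (B*E η)^j * A^(k+2-j) * (Nat.choose (k+2) j : ℂ) / ((j:ℂ)+2) / w^(k+2)).re)
          = fun k : ℕ => ∫ l in (0:ℝ)..1,
            ((-1:ℝ)^(k+1) * ε^(k+2) / ((k:ℝ)+2)) * ((z η l/w)^(k+2)).re * l :=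
        funext fun k => (hval k η).symm
      rw [hfun]
      exact hinner η
  -- evaluate outer integrals
  have hOval : ∀ k : ℕ,
      (∫ η in (0:ℝ)..(2*Real.pi),
        ((-1:ℝ)^(k+1) * ε^(k+2) / ((k:ℝ)+2)) *
          (∑ j ∈ Finset.range (k+2+1),
            (B*E η)^j * A^(k+2-j) * (Nat.choose (k+2) j : ℂ) / ((j:ℂ)+2) / w^(k+2)).re)
      = ((-1:ℝ)^(k+1) * ε^(k+2) / ((k:ℝ)+2)) * Real.pi * ((A/w)^(k+2)).re := by
    intro k
    rw [intervalIntegral.integral_const_mul]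
    have hPint : IntervalIntegrable
        (fun η : ℝ => ∑ j ∈ Finset.range (k+2+1),
          (B*E η)^j * A^(k+2-j) * (Nat.choose (k+2) j : ℂ) / ((j:ℂ)+2) / w^(k+2))
        volume 0 (2*Real.pi) := (hPcont k).intervalIntegrable _ _
    have hre : (∫ η in (0:ℝ)..(2*Real.pi),
        (∑ j ∈ Finset.range (k+2+1),
          (B*E η)^j * A^(k+2-j) * (Nat.choose (k+2) j : ℂ) / ((j:ℂ)+2) / w^(k+2)).re)
        = (∫ η in (0:ℝ)..(2*Real.pi),
          ∑ j ∈ Finset.range (k+2+1),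
            (B*E η)^j * A^(k+2-j) * (Nat.choose (k+2) j : ℂ) / ((j:ℂ)+2) / w^(k+2)).re := by
      have := ContinuousLinearMap.intervalIntegral_comp_comm Complex.reCLM hPint
      simpa using this
    rw [hre, outerComplex A B w s hs (k+2)]
    rw [show (Real.pi:ℂ) * A^(k+2)/w^(k+2) = ((Real.pi:ℝ):ℂ) * (A/w)^(k+2) by
      rw [div_pow]; ring]
    rw [Complex.re_ofReal_mul]
    ring
  have hfun2 : (fun k : ℕ => ∫ η in (0:ℝ)..(2*Real.pi),
        ((-1:ℝ)^(k+1) * ε^(k+2) / ((k:ℝ)+2)) *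
          (∑ j ∈ Finset.range (k+2+1),
            (B*E η)^j * A^(k+2-j) * (Nat.choose (k+2) j : ℂ) / ((j:ℂ)+2) / w^(k+2)).re)
      = fun k : ℕ => ((-1:ℝ)^(k+1) * ε^(k+2) / ((k:ℝ)+2)) * Real.pi * ((A/w)^(k+2)).re :=
    funext hOval
  rw [hfun2] at houter
  have hfin := houter.mul_left (1/(2*Real.pi))
  convert hfin using 2 with k
  · rfl
  have hπ : Real.pi ≠ 0 := Real.pi_ne_zero
  field_simp

/-- Expansion and derivative of the sum of the nonlocal interaction terms
`Ψ2 + Ψ3 + Ψ4` of the contour dynamics functional evaluated at the unit disc. -/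
theorem stmt_13 (y0 ε : ℝ) (hy0 : 0 < y0) (hε : 0 < ε)
    (q Θ : ℝ → ℝ) (hq : ∀ x, 0 < q x) (φ : ℝ)
    (w3 w4 : ℂ)
    (hw3 : w3 = Complex.I * ((Real.sqrt (q φ) * Real.sin (Θ φ) + y0 : ℝ) : ℂ))
    (hw4 : w4 = ((Real.sqrt (q φ) * Real.cos (Θ φ) : ℝ) : ℂ) + Complex.I * (y0 : ℂ))
    (a : ℕ → ℂ)
    (ha : ∀ k : ℕ, a k =
      (1 / ((Real.sqrt (q φ) : ℝ) : ℂ)) ^ k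
        - Complex.exp ((k : ℂ) * ((Θ φ : ℝ) : ℂ) * Complex.I) / w3 ^ k
        - Complex.exp ((k : ℂ) * ((Θ φ : ℝ) : ℂ) * Complex.I) / w4 ^ k)
    (hsmall : 2 * ε < Real.sqrt (q φ) ∧ 2 * ε < ‖w3‖ ∧ 2 * ε < ‖w4‖)
    (Ψ2 Ψ3 Ψ4 : ℝ → ℝ)
    (hΨ2 : ∀ θ : ℝ, Ψ2 θ = (1 / (2 * Real.pi)) *
      ∫ η in (0 : ℝ)..(2 * Real.pi), ∫ l in (0 : ℝ)..1,
        interact ε ((Real.sqrt (q φ) : ℝ) : ℂ)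
          (Complex.exp ((θ : ℂ) * Complex.I) + (l : ℂ) * Complex.exp ((η : ℂ) * Complex.I)) * l)
    (hΨ3 : ∀ θ : ℝ, Ψ3 θ = -(1 / (2 * Real.pi)) *
      ∫ η in (0 : ℝ)..(2 * Real.pi), ∫ l in (0 : ℝ)..1,
        interact ε w3
          (Complex.exp (((θ : ℂ) + ((Θ φ : ℝ) : ℂ)) * Complex.I)
            - (l : ℂ) * Complex.exp (-((η : ℂ) + ((Θ φ : ℝ) : ℂ)) * Complex.I)) * l)
    (hΨ4 : ∀ θ : ℝ, Ψ4 θ = -(1 / (2 * Real.pi)) *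
      ∫ η in (0 : ℝ)..(2 * Real.pi), ∫ l in (0 : ℝ)..1,
        interact ε w4
          (Complex.exp (((θ : ℂ) + ((Θ φ : ℝ) : ℂ)) * Complex.I)
            + (l : ℂ) * Complex.exp (-((η : ℂ) + ((Θ φ : ℝ) : ℂ)) * Complex.I)) * l) :
    ∀ θ : ℝ,
      Summable (fun k : ℕ => |Sterm ε a θ (k + 2)|) ∧
      Ψ2 θ + Ψ3 θ + Ψ4 θ = ∑' k : ℕ, Sterm ε a θ (k + 2) ∧
      HasDerivAt (fun θ' => Ψ2 θ' + Ψ3 θ' + Ψ4 θ')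
        (∑' k : ℕ, Dterm ε a θ (k + 2)) θ := by
  obtain ⟨h1, h2, h3⟩ := hsmall
  have hε2 : (0:ℝ) < 2*ε := by linarith
  -- bound on |a n|
  have habound : ∀ n : ℕ, ‖a n‖ ≤ 3 * (1/(2*ε))^n := by
    intro n
    rw [ha n]
    have hq1 : ‖(1 / ((Real.sqrt (q φ) : ℝ) : ℂ))^n‖ ≤ (1/(2*ε))^n := by
      rw [norm_pow]
      have hb : ‖1 / ((Real.sqrt (q φ) : ℝ) : ℂ)‖ ≤ 1/(2*ε) := by
        rw [norm_div, norm_one, Complex.norm_real, Real.norm_eq_abs,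
          _root_.abs_of_nonneg (Real.sqrt_nonneg _)]
        exact one_div_le_one_div_of_le hε2 h1.le
      exact pow_le_pow_left₀ (norm_nonneg _) hb n
    have hexp1 : ∀ w : ℂ, 2*ε < ‖w‖ →
        ‖Complex.exp ((n : ℂ) * ((Θ φ : ℝ) : ℂ) * Complex.I) / w ^ n‖
          ≤ (1/(2*ε))^n := by
      intro w hw
      rw [norm_div, norm_pow,
        show (n:ℂ) * ((Θ φ : ℝ) : ℂ) * Complex.I = (((n:ℝ) * Θ φ : ℝ):ℂ) * Complex.I by
          push_cast; ring,
        Complex.norm_exp_ofReal_mul_I]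
      calc (1:ℝ)/(‖w‖)^n ≤ 1/(2*ε)^n :=
            one_div_le_one_div_of_le (pow_pos hε2 n) (pow_le_pow_left₀ hε2.le hw.le n)
        _ = (1/(2*ε))^n := by rw [div_pow, one_pow]
    calc ‖_ - _ - _‖
        ≤ ‖_ - _‖ + ‖_‖ := norm_sub_le _ _
      _ ≤ ‖_‖ + ‖_‖ + ‖_‖ :=
          add_le_add_left (norm_sub_le _ _) _
      _ ≤ (1/(2*ε))^n + (1/(2*ε))^n + (1/(2*ε))^n :=
          add_le_add (add_le_add hq1 (hexp1 w3 h2)) (hexp1 w4 h3)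
      _ = 3 * (1/(2*ε))^n := by ring
  have habsE : ∀ (n : ℕ) (x : ℝ),
      ‖Complex.exp ((n : ℂ) * (x : ℂ) * Complex.I)‖ = 1 := by
    intro n x
    rw [show (n:ℂ) * (x:ℂ) * Complex.I = (((n:ℝ) * x : ℝ):ℂ) * Complex.I by push_cast; ring]
    exact Complex.norm_exp_ofReal_mul_I _
  have hεhalf : ∀ n : ℕ, ε^n * (1/(2*ε))^n = (1/2)^n := by
    intro n
    rw [← mul_pow]
    congr 1
    field_simp
  -- uniform bounds on Sterm and Dterm
  have hSb : ∀ (x : ℝ) (k : ℕ), |Sterm ε a x (k+2)| ≤ (3/2) * (1/2:ℝ)^(k+2) := by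
    intro x k
    rw [Sterm, abs_mul]
    have hco : |(-1:ℝ)^(k+2+1) * ε^(k+2) / (2*((k+2:ℕ):ℝ))| ≤ ε^(k+2)/2 := by
      rw [abs_div, abs_mul, _root_.abs_pow, abs_neg, abs_one, one_pow, one_mul,
        _root_.abs_pow, _root_.abs_of_pos hε, abs_mul]
      rw [_root_.abs_of_pos (by norm_num : (0:ℝ) < 2),
        _root_.abs_of_pos (by positivity : (0:ℝ) < ((k+2:ℕ):ℝ))]
      rw [div_le_div_iff₀ (by positivity) (by norm_num)]
      have : (1:ℝ) ≤ ((k+2:ℕ):ℝ) := by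
        have : (0:ℝ) ≤ (k:ℕ) := Nat.cast_nonneg k
        push_cast
        linarith
      nlinarith [pow_pos hε (k+2)]
    have hre : |(a (k+2) * Complex.exp (((k+2:ℕ) : ℂ) * (x : ℂ) * Complex.I)).re|
        ≤ 3 * (1/(2*ε))^(k+2) := by
      refine le_trans (Complex.abs_re_le_norm _) ?_
      rw [norm_mul, habsE (k+2) x, mul_one]
      exact habound (k+2)
    calc |(-1:ℝ)^(k+2+1) * ε^(k+2) / (2*((k+2:ℕ):ℝ))| *
          |(a (k+2) * Complex.exp (((k+2:ℕ) : ℂ) * (x : ℂ) * Complex.I)).re|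
        ≤ (ε^(k+2)/2) * (3 * (1/(2*ε))^(k+2)) :=
          mul_le_mul hco hre (abs_nonneg _) (by positivity)
      _ = (3/2) * (ε^(k+2) * (1/(2*ε))^(k+2)) := by ring
      _ = (3/2) * (1/2:ℝ)^(k+2) := by rw [hεhalf]
  have hDb : ∀ (x : ℝ) (k : ℕ), |Dterm ε a x (k+2)| ≤ (3/2) * (1/2:ℝ)^(k+2) := by
    intro x k
    rw [Dterm, abs_mul]
    have hco : |(-ε)^(k+2) / 2| = ε^(k+2)/2 := by
      rw [abs_div, _root_.abs_pow, abs_neg, _root_.abs_of_pos hε,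
        _root_.abs_of_pos (by norm_num : (0:ℝ) < 2)]
    have him : |(a (k+2) * Complex.exp (((k+2:ℕ) : ℂ) * (x : ℂ) * Complex.I)).im|
        ≤ 3 * (1/(2*ε))^(k+2) := by
      refine le_trans (Complex.abs_im_le_norm _) ?_
      rw [norm_mul, habsE (k+2) x, mul_one]
      exact habound (k+2)
    calc |(-ε)^(k+2)/2| * |(a (k+2) * Complex.exp (((k+2:ℕ) : ℂ) * (x : ℂ) * Complex.I)).im|
        ≤ (ε^(k+2)/2) * (3 * (1/(2*ε))^(k+2)) := by
          rw [hco]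
          exact mul_le_mul_of_nonneg_left him (by positivity)
      _ = (3/2) * (ε^(k+2) * (1/(2*ε))^(k+2)) := by ring
      _ = (3/2) * (1/2:ℝ)^(k+2) := by rw [hεhalf]
  have husum : Summable (fun k : ℕ => (3/2) * (1/2:ℝ)^(k+2)) := by
    simp_rw [pow_add]
    exact ((summable_geometric_of_lt_one (by norm_num) (by norm_num)).mul_right _).mul_left _
  have habs : ∀ θ : ℝ, Summable (fun k : ℕ => |Sterm ε a θ (k + 2)|) := by
    intro θ
    exact husum.of_nonneg_of_le (fun k => abs_nonneg _) (fun k => hSb θ k)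
  -- main HasSum
  have key2 : ∀ θ : ℝ,
      HasSum (fun k : ℕ => Sterm ε a θ (k+2)) (Ψ2 θ + Ψ3 θ + Ψ4 θ) := by
    intro θ
    have hwq : 2 * ε < ‖((Real.sqrt (q φ) : ℝ) : ℂ)‖ := by
      rw [Complex.norm_real, Real.norm_eq_abs, _root_.abs_of_nonneg (Real.sqrt_nonneg _)]
      exact h1
    have hA2 : ‖Complex.exp ((θ:ℂ) * Complex.I)‖ ≤ 1 :=
      le_of_eq (Complex.norm_exp_ofReal_mul_I θ)
    have hA34 : ‖Complex.exp (((θ:ℂ) + ((Θ φ : ℝ):ℂ)) * Complex.I)‖ ≤ 1 := by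
      rw [show (θ:ℂ) + ((Θ φ : ℝ):ℂ) = ((θ + Θ φ : ℝ):ℂ) by push_cast; ring]
      exact le_of_eq (Complex.norm_exp_ofReal_mul_I _)
    have hBneg : ‖-(Complex.exp (-((Θ φ : ℝ):ℂ) * Complex.I))‖ ≤ 1 := by
      rw [norm_neg,
        show -((Θ φ : ℝ):ℂ) = ((-Θ φ : ℝ):ℂ) by push_cast; ring]
      exact le_of_eq (Complex.norm_exp_ofReal_mul_I _)
    have hBpos : ‖Complex.exp (-((Θ φ : ℝ):ℂ) * Complex.I)‖ ≤ 1 := by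
      rw [show -((Θ φ : ℝ):ℂ) = ((-Θ φ : ℝ):ℂ) by push_cast; ring]
      exact le_of_eq (Complex.norm_exp_ofReal_mul_I _)
    -- Ψ2
    have k2 := key ε hε ((Real.sqrt (q φ) : ℝ) : ℂ) (Complex.exp ((θ:ℂ) * Complex.I)) 1
      hA2 (by simp) 1 one_ne_zero hwq
    simp only [Int.cast_one, one_mul, mul_one] at k2
    -- Ψ3
    have k3 := key ε hε w3 (Complex.exp (((θ:ℂ) + ((Θ φ : ℝ):ℂ)) * Complex.I))
      (-(Complex.exp (-((Θ φ : ℝ):ℂ) * Complex.I))) hA34 hBneg (-1) (by norm_num) h2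
    have e3 : ∀ (η l : ℝ),
        Complex.exp (((θ:ℂ) + ((Θ φ : ℝ):ℂ)) * Complex.I)
          + (l:ℂ) * (-(Complex.exp (-((Θ φ : ℝ):ℂ) * Complex.I)))
            * Complex.exp ((((-1:ℤ)):ℂ) * (η:ℂ) * Complex.I)
        = Complex.exp (((θ:ℂ) + ((Θ φ : ℝ):ℂ)) * Complex.I)
          - (l:ℂ) * Complex.exp (-((η:ℂ) + ((Θ φ : ℝ):ℂ)) * Complex.I) := by
      intro η l
      have hprod : Complex.exp (-((Θ φ : ℝ):ℂ) * Complex.I)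
          * Complex.exp ((((-1:ℤ)):ℂ) * (η:ℂ) * Complex.I)
          = Complex.exp (-((η:ℂ) + ((Θ φ : ℝ):ℂ)) * Complex.I) := by
        rw [← Complex.exp_add]
        congr 1
        push_cast
        ring
      rw [← hprod]
      ring
    simp only [e3] at k3
    -- Ψ4
    have k4 := key ε hε w4 (Complex.exp (((θ:ℂ) + ((Θ φ : ℝ):ℂ)) * Complex.I))
      (Complex.exp (-((Θ φ : ℝ):ℂ) * Complex.I)) hA34 hBpos (-1) (by norm_num) h3
    have e4 : ∀ (η l : ℝ),
        Complex.exp (((θ:ℂ) + ((Θ φ : ℝ):ℂ)) * Complex.I)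
          + (l:ℂ) * Complex.exp (-((Θ φ : ℝ):ℂ) * Complex.I)
            * Complex.exp ((((-1:ℤ)):ℂ) * (η:ℂ) * Complex.I)
        = Complex.exp (((θ:ℂ) + ((Θ φ : ℝ):ℂ)) * Complex.I)
          + (l:ℂ) * Complex.exp (-((η:ℂ) + ((Θ φ : ℝ):ℂ)) * Complex.I) := by
      intro η l
      have hprod : Complex.exp (-((Θ φ : ℝ):ℂ) * Complex.I)
          * Complex.exp ((((-1:ℤ)):ℂ) * (η:ℂ) * Complex.I)
          = Complex.exp (-((η:ℂ) + ((Θ φ : ℝ):ℂ)) * Complex.I) := by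
        rw [← Complex.exp_add]
        congr 1
        push_cast
        ring
      rw [← hprod]
      ring
    simp only [e4] at k4
    have hsum := (k2.sub k3).sub k4
    rw [hΨ2 θ, hΨ3 θ, hΨ4 θ]
    convert hsum using 1
    · rfl
    · funext k
      have hzz : a (k+2) * Complex.exp (((k+2:ℕ):ℂ) * (θ:ℂ) * Complex.I)
          = (Complex.exp ((θ:ℂ) * Complex.I) / ((Real.sqrt (q φ) : ℝ):ℂ))^(k+2)
            - (Complex.exp (((θ:ℂ) + ((Θ φ : ℝ):ℂ)) * Complex.I) / w3)^(k+2)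
            - (Complex.exp (((θ:ℂ) + ((Θ φ : ℝ):ℂ)) * Complex.I) / w4)^(k+2) := by
        rw [ha (k+2)]
        simp only [div_pow, one_pow, ← Complex.exp_nat_mul]
        rw [show ((k+2:ℕ):ℂ) * (((θ:ℂ) + ((Θ φ : ℝ):ℂ)) * Complex.I)
            = (((k+2:ℕ):ℂ) * ((Θ φ : ℝ):ℂ) * Complex.I)
              + (((k+2:ℕ):ℂ) * (θ:ℂ) * Complex.I) by ring, Complex.exp_add]
        rw [show ((k+2:ℕ):ℂ) * ((θ:ℂ) * Complex.I)
            = ((k+2:ℕ):ℂ) * (θ:ℂ) * Complex.I by ring]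
        ring
      rw [Sterm, hzz, Complex.sub_re, Complex.sub_re]
      push_cast
      rw [show k+2+1 = k+3 from rfl, negpow3]
      ring
    · ring
  -- derivative of each term
  have hD : ∀ (k : ℕ) (x : ℝ),
      HasDerivAt (fun θ' => Sterm ε a θ' (k+2)) (Dterm ε a x (k+2)) x := by
    intro k x
    have inner0 : HasDerivAt (fun y : ℝ => (((k+2:ℕ):ℂ) * Complex.I) * (y:ℂ))
        (((k+2:ℕ):ℂ) * Complex.I) x := by
      simpa using ((hasDerivAt_id ((x:ℝ):ℂ)).const_mul (((k+2:ℕ):ℂ) * Complex.I)).comp_ofReal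
    have efun : (fun y : ℝ => (((k+2:ℕ):ℂ) * Complex.I) * (y:ℂ))
        = fun y : ℝ => ((k+2:ℕ):ℂ) * (y:ℂ) * Complex.I := by
      funext y; ring
    rw [efun] at inner0
    have hexp := inner0.cexp
    have hm := hexp.const_mul (a (k+2))
    have hre := Complex.reCLM.hasFDerivAt.comp_hasDerivAt x hm
    have hfin := hre.const_mul ((-1:ℝ)^(k+2+1) * ε^(k+2) / (2*((k+2:ℕ):ℝ)))
    simp only [Complex.reCLM_apply] at hfin
    have hgoal : (fun θ' : ℝ => Sterm ε a θ' (k+2))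
        = fun θ' : ℝ => ((-1:ℝ)^(k+2+1) * ε^(k+2) / (2*((k+2:ℕ):ℝ))) *
            (a (k+2) * Complex.exp (((k+2:ℕ):ℂ) * (θ':ℂ) * Complex.I)).re := by
      funext θ'; rw [Sterm]
    rw [hgoal]
    convert hfin using 1
    · rfl
    · rfl
    · rfl
    rw [Dterm]
    have hval : (a (k+2) * (Complex.exp (((k+2:ℕ):ℂ) * (x:ℂ) * Complex.I)
        * (((k+2:ℕ):ℂ) * Complex.I))).re
        = -(((k+2:ℕ):ℝ) *
            (a (k+2) * Complex.exp (((k+2:ℕ):ℂ) * (x:ℂ) * Complex.I)).im) := by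
      rw [show a (k+2) * (Complex.exp (((k+2:ℕ):ℂ) * (x:ℂ) * Complex.I)
          * (((k+2:ℕ):ℂ) * Complex.I))
          = (a (k+2) * Complex.exp (((k+2:ℕ):ℂ) * (x:ℂ) * Complex.I))
            * (((k+2:ℕ):ℂ) * Complex.I) by ring]
      simp [Complex.mul_re, Complex.mul_im]
      ring
    rw [hval]
    have hk0 : ((k+2:ℕ):ℝ) ≠ 0 := by positivity
    field_simp
    rw [show k+2+1 = k+3 from rfl, negpow3]
    ring
  -- assemble
  intro θ
  refine ⟨habs θ, (key2 θ).tsum_eq.symm, ?_⟩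
  have hfun : (fun θ' => Ψ2 θ' + Ψ3 θ' + Ψ4 θ')
      = fun θ' => ∑' k : ℕ, Sterm ε a θ' (k+2) :=
    funext fun θ' => (key2 θ').tsum_eq.symm
  rw [hfun]
  exact hasDerivAt_tsum husum hD
    (fun k y => by rw [Real.norm_eq_abs]; exact hDb y k)
    ((habs θ).of_abs) θ
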